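/- arXiv:1410.7977 — 2 statements merged into one kernel-verified Lean document; each statement's English description precedes it below -/
import Mathlib

section
/- More generally, for any A ∈ ℕ and s < 2^A: D_{s+2^A}^κ(x) = D_{2^A}(x) + r_A(x)·D_s^w(τ_A(x)) for all x ∈ G. -/
open MeasureTheory Filter Finset
open scoped ENNReal NNReal

/-- The Walsh group `G = ∏ ℤ₂`. -/
abbrev WG := ℕ → ZMod 2

noncomputable section

/-- The `k`-th Rademacher function `r_k(x) = (-1)^{x_k}`. -/
def rad (k : ℕ) (x : WG) : ℝ := (-1 : ℝ) ^ (x k).val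

/-- The Walsh-Paley function `w_n(x) = (-1)^{∑ n_k x_k}`. -/
def walsh (n : ℕ) (x : WG) : ℝ :=
  (-1 : ℝ) ^ (∑ k ∈ Finset.range (n + 1), if n.testBit k then (x k).val else 0)

/-- The Walsh-Kaczmarz function
`κ_n(x) = r_{|n|}(x)·(-1)^{∑_{k<|n|} n_k x_{|n|-1-k}}`, `κ_0 = 1`,
where `|n| = Nat.log 2 n` is the position of the leading binary digit. -/
def kacz (n : ℕ) (x : WG) : ℝ :=
  if n = 0 then 1 else
    rad (Nat.log 2 n) x *
      (-1 : ℝ) ^ (∑ k ∈ Finset.range (Nat.log 2 n),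
        if n.testBit k then (x (Nat.log 2 n - 1 - k)).val else 0)

/-- Walsh-Paley Dirichlet kernel. -/
def Dw (n : ℕ) (x : WG) : ℝ := ∑ k ∈ Finset.range n, walsh k x

/-- Walsh-Kaczmarz Dirichlet kernel. -/
def Dk (n : ℕ) (x : WG) : ℝ := ∑ k ∈ Finset.range n, kacz k x

/-- Walsh-Fejér kernel `K_n = (1/n) ∑_{k=1}^n D_k`. -/
def Kw (n : ℕ) (x : WG) : ℝ := (1 / n : ℝ) * ∑ k ∈ Finset.Icc 1 n, Dw k x

/-- The transformation reversing the first `A` coordinates. -/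
def tau (A : ℕ) (x : WG) : WG := fun k => if k < A then x (A - 1 - k) else x k

/-- The dyadic interval (cylinder) `I_n(x)`. -/
def cyl (n : ℕ) (x : WG) : Set WG := {y | ∀ k < n, y k = x k}

/-- `I_n = I_n(0)`. -/
def In (n : ℕ) : Set WG := cyl n 0

/-- A measure `μ` on `WG` is the Haar (product) measure iff every cylinder of
level `n` has measure `2⁻ⁿ`. -/
def IsHaar (μ : Measure WG) : Prop :=
  ∀ (n : ℕ) (x : WG), μ (cyl n x) = (2 : ℝ≥0∞)⁻¹ ^ n

/-- Walsh-Fourier coefficient. -/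
def fhatW (μ : Measure WG) (f : WG → ℝ) (j : ℕ) : ℝ := ∫ x, f x * walsh j x ∂μ

/-- Walsh-Fourier partial sum `S_N f`. -/
def partialW (μ : Measure WG) (N : ℕ) (f : WG → ℝ) (x : WG) : ℝ :=
  ∑ j ∈ Finset.range N, fhatW μ f j * walsh j x

/-- Walsh-Kaczmarz-Fourier coefficient. -/
def fhatK (μ : Measure WG) (f : WG → ℝ) (j : ℕ) : ℝ := ∫ x, f x * kacz j x ∂μ

/-- Walsh-Kaczmarz-Fourier partial sum `S_N^κ f`. -/
def partialK (μ : Measure WG) (N : ℕ) (f : WG → ℝ) (x : WG) : ℝ :=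
  ∑ j ∈ Finset.range N, fhatK μ f j * kacz j x

/-- Walsh-Kaczmarz-Fejér mean `σ_n^κ f`. -/
def sigmaK (μ : Measure WG) (n : ℕ) (f : WG → ℝ) (x : WG) : ℝ :=
  (1 / n : ℝ) * ∑ j ∈ Finset.Icc 1 n, partialK μ j f x

end

/-!
For `j < 2^A` the binary digits of `2^A + j` are those of `j` plus a leading digit at `A`, so
`w_{2^A+j} = r_A · w_j`, while `κ_{2^A+j} = r_A · w_j ∘ τ_A` because the Kaczmarz function reads
the lower digits against the reversed coordinates. Summing over `j < s` splits `D^κ_{2^A+s}` into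
`D^κ_{2^A}` and `r_A · D^w_s ∘ τ_A`. Finally `D^κ_{2^A} = D_{2^A}` by induction on `A`, since
`D_{2^A} = ∏_{k<A} (1 + r_k)` is invariant under `τ_A`.
-/

theorem sum_range_testBit_eq_of_lt_two_pow {M : Type*} [AddCommMonoid M] {n A N : ℕ}
    (hn : n < 2 ^ A) (hAN : A ≤ N) (f : ℕ → M) :
    ∑ k ∈ range N, (if n.testBit k then f k else 0)
      = ∑ k ∈ range A, (if n.testBit k then f k else 0) := by
  refine (sum_subset (range_subset_range.mpr hAN) fun k _ hkA => ?_).symm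
  have hk : n < 2 ^ k := hn.trans_le (Nat.pow_le_pow_right two_pos (by simpa using hkA))
  simp [Nat.testBit_lt_two_pow hk]

theorem walsh_eq_of_lt_two_pow {n A : ℕ} (hn : n < 2 ^ A) (x : WG) :
    walsh n x = (-1 : ℝ) ^ (∑ k ∈ range A, if n.testBit k then (x k).val else 0) := by
  have hn' : n < 2 ^ (n + 1) := (Nat.lt_two_pow_self).trans (Nat.pow_lt_pow_succ one_lt_two)
  rw [walsh,
    ← sum_range_testBit_eq_of_lt_two_pow hn' (le_max_left (n + 1) A),
    sum_range_testBit_eq_of_lt_two_pow hn (le_max_right (n + 1) A)]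

theorem two_pow_add_lt_two_pow_succ {A j : ℕ} (hj : j < 2 ^ A) : 2 ^ A + j < 2 ^ (A + 1) := by
  rw [pow_succ]; omega

theorem testBit_two_pow_add_self {A j : ℕ} (hj : j < 2 ^ A) : (2 ^ A + j).testBit A = true := by
  rw [Nat.testBit_two_pow_add_eq, Nat.testBit_lt_two_pow hj, Bool.not_false]

theorem sum_range_testBit_two_pow_add {M : Type*} [AddCommMonoid M] (A j : ℕ) (f : ℕ → M) :
    ∑ k ∈ range A, (if (2 ^ A + j).testBit k then f k else 0)
      = ∑ k ∈ range A, (if j.testBit k then f k else 0) := by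
  refine sum_congr rfl fun k hk => ?_
  rw [Nat.testBit_two_pow_add_gt (mem_range.mp hk)]

theorem walsh_two_pow_add {A j : ℕ} (hj : j < 2 ^ A) (x : WG) :
    walsh (2 ^ A + j) x = rad A x * walsh j x := by
  rw [walsh_eq_of_lt_two_pow (two_pow_add_lt_two_pow_succ hj), sum_range_succ,
    sum_range_testBit_two_pow_add, if_pos (testBit_two_pow_add_self hj), pow_add,
    walsh_eq_of_lt_two_pow hj, rad, mul_comm]

theorem kacz_two_pow_add {A j : ℕ} (hj : j < 2 ^ A) (x : WG) :
    kacz (2 ^ A + j) x = rad A x * walsh j (tau A x) := by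
  have hlog : Nat.log 2 (2 ^ A + j) = A :=
    Nat.log_eq_of_pow_le_of_lt_pow (by omega) (two_pow_add_lt_two_pow_succ hj)
  rw [kacz, if_neg (by positivity), hlog, sum_range_testBit_two_pow_add,
    walsh_eq_of_lt_two_pow hj]
  congr 2
  refine sum_congr rfl fun k hk => ?_
  rw [tau, if_pos (mem_range.mp hk)]

theorem Dw_two_pow_add {A s : ℕ} (hs : s ≤ 2 ^ A) (x : WG) :
    Dw (2 ^ A + s) x = Dw (2 ^ A) x + rad A x * Dw s x := by
  rw [Dw, sum_range_add, Dw, Dw, mul_sum]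
  congr 1
  exact sum_congr rfl fun j hj => walsh_two_pow_add ((mem_range.mp hj).trans_le hs) x

theorem Dk_two_pow_add {A s : ℕ} (hs : s ≤ 2 ^ A) (x : WG) :
    Dk (2 ^ A + s) x = Dk (2 ^ A) x + rad A x * Dw s (tau A x) := by
  rw [Dk, sum_range_add, Dk, Dw, mul_sum]
  congr 1
  exact sum_congr rfl fun j hj => kacz_two_pow_add ((mem_range.mp hj).trans_le hs) x

theorem Dw_two_pow_eq_prod (A : ℕ) (x : WG) : Dw (2 ^ A) x = ∏ k ∈ range A, (1 + rad k x) := by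
  induction A with
  | zero => simp [Dw, walsh]
  | succ A ih => rw [pow_succ, mul_two, Dw_two_pow_add le_rfl, prod_range_succ, ← ih]; ring

theorem Dw_two_pow_tau (A : ℕ) (x : WG) : Dw (2 ^ A) (tau A x) = Dw (2 ^ A) x := by
  rw [Dw_two_pow_eq_prod, Dw_two_pow_eq_prod, ← prod_range_reflect (fun k => 1 + rad k x)]
  refine prod_congr rfl fun k hk => ?_
  rw [rad, rad, tau, if_pos (mem_range.mp hk)]

theorem Dk_two_pow (A : ℕ) (x : WG) : Dk (2 ^ A) x = Dw (2 ^ A) x := by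
  induction A with
  | zero => simp [Dk, Dw, kacz, walsh]
  | succ A ih =>
    rw [pow_succ, mul_two, Dk_two_pow_add le_rfl, Dw_two_pow_add le_rfl, ih, Dw_two_pow_tau]

/-- For any `A` and `s < 2^A`:
`D_{s+2^A}^κ(x) = D_{2^A}(x) + r_A(x)·D_s^w(τ_A(x))`. -/
theorem kacz_dirichlet_decomposition (A s : ℕ) (hs : s < 2 ^ A) (x : WG) :
    Dk (s + 2 ^ A) x = Dw (2 ^ A) x + rad A x * Dw s (tau A x) := by
  rw [add_comm, Dk_two_pow_add hs.le, Dk_two_pow]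
end

section
/- Let q_A = ∑_{j=0}^{A} 4^j. Then for i ≥ 3, ∫_G |q_{A-1} K_{q_{A-1}}^w(τ_{2A}(x))|^{1/2} dμ(x) ≥ c·A for an absolute constant c > 0, where A = 2^{i-1} — equivalently, ∫_G (n |K_n^w|)^{1/2} dμ along the sequence n = q_{A-1} grows at least linearly in A. -/
open MeasureTheory Filter Finset
open scoped ENNReal NNReal

noncomputable section

/-- `q_A = ∑_{j=0}^{A} 4^j`. -/
def qq (A : ℕ) : ℕ := ∑ j ∈ Finset.range (A + 1), 4 ^ j

/-! The sums `F_n = ∑_{k=1}^n D_k = n K_n` satisfy `F_{2^t + r} = F_{2^t} + r D_{2^t} + r_t F_r`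
for `r ≤ 2^t`, and `D_{2^t} = 2^t 𝟙_{I_t}`. If the first digits of `y` are `0 … 0 1 0 1`, with the
ones at `2m` and `2m + 2`, this gives `F_{2^{2m+2}}(y) = 2·16^m` and `F_{2^t}(y) = 0` for
`t > 2m + 2`; since `q_{B+1} = 4^{B+1} + q_B`, it follows that
`|F_{q_B}(y)| = |F_{q_{m+1}}(y)| ≥ 2·16^m - |F_{q_m}(y)| ≥ 16^m` for every `B > m`, by the trivial
bound `|F_n| ≤ n(n+1)/2`. Under `τ_{2A}` these cylinders (`m < A - 1`) pull back to disjoint sets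
of measure `2^{-(2m+3)}` on which `√|F_{q_{A-1}} ∘ τ_{2A}| ≥ 4^m`, so each contributes `1/8`. -/

open Function

lemma walsh_eq_of_lt {n M : ℕ} (h : n < M) (y : WG) :
    walsh n y = (-1 : ℝ) ^ (∑ k ∈ range M, if n.testBit k then (y k).val else 0) := by
  refine congrArg _ (sum_subset (range_subset_range.2 h) fun k _ hk => ?_)
  have hnk : n < 2 ^ k := Nat.lt_of_lt_of_le (by simpa using hk) k.lt_two_pow_self.le
  simp [Nat.testBit_lt_two_pow hnk]

lemma abs_walsh (n : ℕ) (y : WG) : |walsh n y| = 1 := by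
  simp [walsh]

lemma abs_rad (k : ℕ) (y : WG) : |rad k y| = 1 := by
  simp [rad]

lemma rad_of_eq_zero {k : ℕ} {y : WG} (h : y k = 0) : rad k y = 1 := by
  simp [rad, h]

lemma rad_of_eq_one {k : ℕ} {y : WG} (h : y k = 1) : rad k y = -1 := by
  simp [rad, h, ZMod.val_one]

lemma walsh_two_pow_add_s16 {t i : ℕ} (h : i < 2 ^ t) (y : WG) :
    walsh (2 ^ t + i) y = rad t y * walsh i y := by
  have ht : t < 2 ^ t + i + 1 := by have := t.lt_two_pow_self; omega
  rw [walsh_eq_of_lt (Nat.lt_succ_self _), walsh_eq_of_lt (M := 2 ^ t + i + 1) (by omega), rad,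
    ← pow_add]
  congr 1
  have hit : i.testBit t = false := Nat.testBit_lt_two_pow h
  have hsplit : ∀ k, (if (2 ^ t + i).testBit k then (y k).val else 0)
      = (if t = k then (y k).val else 0) + (if i.testBit k then (y k).val else 0) := by
    intro k
    rw [add_comm, ← Nat.or_two_pow_eq_add_of_lt h]
    rcases eq_or_ne t k with rfl | hk <;> simp [*]
  rw [sum_congr rfl fun k _ => hsplit k, sum_add_distrib,
    sum_ite_eq (range _) t, if_pos (by simpa using ht)]

lemma Dw_two_pow_add_s16 {t j : ℕ} (h : j ≤ 2 ^ t) (y : WG) :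
    Dw (2 ^ t + j) y = Dw (2 ^ t) y + rad t y * Dw j y := by
  rw [Dw, sum_range_add, Dw, Dw, mul_sum]
  congr 1
  exact sum_congr rfl fun i hi => walsh_two_pow_add_s16 (by simp at hi; omega) y

lemma Dw_two_pow_succ (t : ℕ) (y : WG) : Dw (2 ^ (t + 1)) y = (1 + rad t y) * Dw (2 ^ t) y := by
  rw [pow_succ, mul_two, Dw_two_pow_add_s16 le_rfl]
  ring

lemma Dw_two_pow_of_forall_eq_zero {t : ℕ} {y : WG} (h : ∀ k < t, y k = 0) :
    Dw (2 ^ t) y = 2 ^ t := by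
  induction t with
  | zero => simp [Dw, walsh]
  | succ t ih =>
    rw [Dw_two_pow_succ, ih fun k hk => h k (by omega), rad_of_eq_zero (h t t.lt_succ_self)]
    ring

lemma Dw_two_pow_eq_zero {t k : ℕ} {y : WG} (hk : k < t) (h : y k = 1) : Dw (2 ^ t) y = 0 := by
  induction t with
  | zero => omega
  | succ t ih =>
    rw [Dw_two_pow_succ]
    rcases Nat.lt_succ_iff_lt_or_eq.1 hk with hk | rfl
    · rw [ih hk, mul_zero]
    · rw [rad_of_eq_one h]
      ring

lemma abs_Dw_le (n : ℕ) (y : WG) : |Dw n y| ≤ n := by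
  calc |Dw n y| ≤ ∑ i ∈ range n, |walsh i y| := abs_sum_le_sum_abs _ _
    _ = n := by simp [abs_walsh]

def fejerSum (n : ℕ) (y : WG) : ℝ := ∑ k ∈ Icc 1 n, Dw k y

lemma natCast_mul_Kw (n : ℕ) (y : WG) : n * Kw n y = fejerSum n y := by
  rcases eq_or_ne n 0 with rfl | hn
  · simp [Kw, fejerSum]
  · rw [Kw, fejerSum, ← mul_assoc, mul_one_div_cancel (by exact_mod_cast hn), one_mul]

lemma fejerSum_succ (n : ℕ) (y : WG) : fejerSum (n + 1) y = fejerSum n y + Dw (n + 1) y :=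
  sum_Icc_succ_top (by omega) _

lemma fejerSum_two_pow_add {t r : ℕ} (h : r ≤ 2 ^ t) (y : WG) :
    fejerSum (2 ^ t + r) y = fejerSum (2 ^ t) y + r * Dw (2 ^ t) y + rad t y * fejerSum r y := by
  induction r with
  | zero => simp [fejerSum]
  | succ r ih =>
    rw [← add_assoc, fejerSum_succ, ih (by omega), add_assoc (2 ^ t), Dw_two_pow_add_s16 h,
      fejerSum_succ]
    push_cast
    ring

lemma fejerSum_two_pow_succ (t : ℕ) (y : WG) :
    fejerSum (2 ^ (t + 1)) y = (1 + rad t y) * fejerSum (2 ^ t) y + 2 ^ t * Dw (2 ^ t) y := by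
  rw [pow_succ, mul_two, fejerSum_two_pow_add le_rfl]
  push_cast
  ring

lemma abs_fejerSum_le (n : ℕ) (y : WG) : |fejerSum n y| ≤ n * (n + 1) / 2 := by
  induction n with
  | zero => simp [fejerSum]
  | succ n ih =>
    rw [fejerSum_succ]
    have := abs_Dw_le (n + 1) y
    push_cast at this ⊢
    linarith [abs_add_le (fejerSum n y) (Dw (n + 1) y)]

@[fun_prop]
lemma measurable_fejerSum (n : ℕ) : Measurable (fejerSum n) := by
  unfold fejerSum Dw walsh
  fun_prop

lemma three_mul_qq_add_one (B : ℕ) : 3 * qq B + 1 = 4 ^ (B + 1) := by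
  induction B with
  | zero => simp [qq]
  | succ B ih =>
    rw [qq, sum_range_succ, ← qq, pow_succ 4 (B + 1)]
    omega

lemma qq_succ (B : ℕ) : qq (B + 1) = 2 ^ (2 * B + 2) + qq B := by
  rw [qq, sum_range_succ, ← qq, add_comm, show 2 * B + 2 = 2 * (B + 1) by ring, pow_mul]
  norm_num

lemma qq_le (B : ℕ) : qq B ≤ 2 ^ (2 * B + 2) := by
  have := three_mul_qq_add_one B
  rw [show 2 * B + 2 = 2 * (B + 1) by ring, pow_mul]
  norm_num
  omega

lemma fejerSum_qq_succ (B : ℕ) (y : WG) :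
    fejerSum (qq (B + 1)) y = fejerSum (2 ^ (2 * B + 2)) y + qq B * Dw (2 ^ (2 * B + 2)) y
      + rad (2 * B + 2) y * fejerSum (qq B) y := by
  rw [qq_succ, fejerSum_two_pow_add (qq_le B)]

lemma abs_fejerSum_qq_le (B : ℕ) (y : WG) : |fejerSum (qq B) y| ≤ 16 ^ B := by
  have h3 : 3 * (qq B : ℝ) + 1 = 4 * 4 ^ B := by
    rw [← pow_succ']
    exact_mod_cast three_mul_qq_add_one B
  have h16 : (16 : ℝ) ^ B = 4 ^ B * 4 ^ B := by rw [← mul_pow]; norm_num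
  have h := abs_fejerSum_le (qq B) y
  -- with `N = 4^B`: `9 q (q + 1) = (4N - 1)(4N + 2) ≤ 18 N²` since `2 (N - 1)² ≥ 0`
  nlinarith [sq_nonneg ((4 : ℝ) ^ B - 1)]

def spikePair (m : ℕ) : WG := fun k => if k = 2 * m ∨ k = 2 * m + 2 then 1 else 0

section spikePair

variable {m : ℕ} {y : WG}

lemma digits_of_mem_cyl_spikePair (hy : y ∈ cyl (2 * m + 3) (spikePair m)) :
    (∀ k < 2 * m, y k = 0) ∧ y (2 * m) = 1 ∧ y (2 * m + 1) = 0 ∧ y (2 * m + 2) = 1 := by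
  refine ⟨fun k hk => ?_, ?_, ?_, ?_⟩ <;> rw [hy _ (by omega), spikePair]
  · rw [if_neg (by omega)]
  · rw [if_pos (by omega)]
  · rw [if_neg (by omega)]
  · rw [if_pos (by omega)]

lemma fejerSum_two_pow_of_mem_cyl_spikePair (hy : y ∈ cyl (2 * m + 3) (spikePair m)) :
    fejerSum (2 ^ (2 * m + 2)) y = 2 * 16 ^ m := by
  obtain ⟨hlow, h2m, h2m1, -⟩ := digits_of_mem_cyl_spikePair hy
  rw [fejerSum_two_pow_succ, fejerSum_two_pow_succ, rad_of_eq_one h2m, rad_of_eq_zero h2m1,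
    Dw_two_pow_of_forall_eq_zero hlow, Dw_two_pow_eq_zero (Nat.lt_succ_self _) h2m,
    show (16 : ℝ) = 2 ^ 4 by norm_num, ← pow_mul]
  ring

lemma fejerSum_two_pow_eq_zero_of_mem_cyl_spikePair (hy : y ∈ cyl (2 * m + 3) (spikePair m))
    {t : ℕ} (ht : 2 * m + 3 ≤ t) : fejerSum (2 ^ t) y = 0 := by
  obtain ⟨-, h2m, -, h2m2⟩ := digits_of_mem_cyl_spikePair hy
  induction t, ht using Nat.le_induction with
  | base =>
    rw [fejerSum_two_pow_succ, rad_of_eq_one h2m2, Dw_two_pow_eq_zero (by omega) h2m]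
    ring
  | succ t ht ih =>
    rw [fejerSum_two_pow_succ, ih, Dw_two_pow_eq_zero (by omega) h2m]
    ring

lemma le_abs_fejerSum_qq_of_mem_cyl_spikePair (hy : y ∈ cyl (2 * m + 3) (spikePair m))
    {B : ℕ} (hB : m + 1 ≤ B) : 16 ^ m ≤ |fejerSum (qq B) y| := by
  obtain ⟨-, h2m, -, h2m2⟩ := digits_of_mem_cyl_spikePair hy
  induction B, hB using Nat.le_induction with
  | base =>
    rw [fejerSum_qq_succ, fejerSum_two_pow_of_mem_cyl_spikePair hy, rad_of_eq_one h2m2,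
      Dw_two_pow_eq_zero (by omega) h2m, mul_zero, add_zero, neg_one_mul, ← sub_eq_add_neg]
    linarith [abs_fejerSum_qq_le m y, le_abs_self (fejerSum (qq m) y),
      le_abs_self (2 * 16 ^ m - fejerSum (qq m) y)]
  | succ B hB ih =>
    rw [fejerSum_qq_succ, fejerSum_two_pow_eq_zero_of_mem_cyl_spikePair hy (by omega),
      Dw_two_pow_eq_zero (by omega) h2m, mul_zero, zero_add, zero_add, abs_mul, abs_rad, one_mul]
    exact ih

end spikePair

@[fun_prop]
lemma measurable_tau (N : ℕ) : Measurable (tau N) :=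
  measurable_pi_lambda _ fun k => by unfold tau; split_ifs <;> exact measurable_pi_apply _

lemma measurableSet_cyl (n : ℕ) (x : WG) : MeasurableSet (cyl n x) := by
  simp only [cyl, Set.ofPred_forall]
  exact MeasurableSet.iInter fun k => MeasurableSet.iInter fun _ =>
    measurableSet_eq_fun (measurable_pi_apply k) measurable_const

lemma IsHaar.isProbabilityMeasure {μ : Measure WG} (hμ : IsHaar μ) : IsProbabilityMeasure μ :=
  ⟨by simpa [cyl] using hμ 0 0⟩

lemma IsHaar.measure_setOf_forall_Ico {μ : Measure WG} (hμ : IsHaar μ) {n N : ℕ} (h : n ≤ N)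
    (p : WG) : μ {x | ∀ j ∈ Ico n N, x j = p j} = 2⁻¹ ^ (N - n) := by
  have hunion : {x | ∀ j ∈ Ico n N, x j = p j}
      = ⋃ v : Fin n → ZMod 2, cyl N fun j => if hj : j < n then v ⟨j, hj⟩ else p j := by
    ext x
    simp only [Set.mem_ofPred_eq, mem_Ico, Set.mem_iUnion, cyl]
    constructor
    · intro hx
      refine ⟨fun k => x k, fun k hk => ?_⟩
      split_ifs with hkn
      · rfl
      · exact hx k ⟨by omega, hk⟩
    · rintro ⟨v, hv⟩ j ⟨hnj, hjN⟩
      rw [hv j hjN, dif_neg (by omega)]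
  have hdisj : Pairwise (Disjoint on fun v : Fin n → ZMod 2 =>
      cyl N fun j => if hj : j < n then v ⟨j, hj⟩ else p j) := by
    intro v w hvw
    refine Set.disjoint_left.2 fun x hxv hxw => hvw (funext fun k => ?_)
    have hv := hxv k (by omega)
    have hw := hxw k (by omega)
    simp only [dif_pos k.2] at hv hw
    rw [← hv, ← hw]
  rw [hunion, measure_iUnion hdisj fun v => measurableSet_cyl _ _]
  rw [tsum_fintype, sum_congr rfl fun v _ => hμ N _, sum_const, card_univ, Fintype.card_fun,
    ZMod.card, Fintype.card_fin, nsmul_eq_mul]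
  obtain ⟨k, rfl⟩ := Nat.exists_eq_add_of_le h
  rw [Nat.add_sub_cancel_left, pow_add, ← mul_assoc, Nat.cast_pow, Nat.cast_ofNat, ← mul_pow,
    ENNReal.mul_inv_cancel two_ne_zero ENNReal.ofNat_ne_top, one_pow, one_mul]

lemma preimage_tau_cyl {M N : ℕ} (h : M ≤ N) (p : WG) :
    tau N ⁻¹' cyl M p = {x | ∀ j ∈ Ico (N - M) N, x j = tau N p j} := by
  ext x
  simp only [Set.mem_preimage, cyl, tau, Set.mem_ofPred_eq, mem_Ico]
  constructor
  · rintro hx j ⟨hj, hjN⟩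
    have := hx (N - 1 - j) (by omega)
    rw [if_pos (by omega), show N - 1 - (N - 1 - j) = j by omega] at this
    rw [this, if_pos hjN]
  · intro hx k hk
    have := hx (N - 1 - k) (by omega)
    rw [if_pos (by omega : k < N), this, if_pos (by omega), show N - 1 - (N - 1 - k) = k by omega]

lemma IsHaar.measure_preimage_tau_cyl {μ : Measure WG} (hμ : IsHaar μ) {M N : ℕ} (h : M ≤ N)
    (p : WG) : μ (tau N ⁻¹' cyl M p) = 2⁻¹ ^ M := by
  rw [preimage_tau_cyl h, hμ.measure_setOf_forall_Ico (Nat.sub_le N M), Nat.sub_sub_self h]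

lemma pairwise_disjoint_cyl_spikePair :
    Pairwise (Disjoint on fun m => cyl (2 * m + 3) (spikePair m)) := by
  have key : ∀ {a b : ℕ}, a < b →
      Disjoint (cyl (2 * a + 3) (spikePair a)) (cyl (2 * b + 3) (spikePair b)) := by
    intro a b hab
    refine Set.disjoint_left.2 fun x hxa hxb => ?_
    have ha := hxa (2 * a) (by omega)
    have hb := hxb (2 * a) (by omega)
    rw [spikePair, if_pos (Or.inl rfl)] at ha
    rw [spikePair, if_neg (by omega)] at hb
    exact one_ne_zero (ha.symm.trans hb)
  intro a b hab
  rcases hab.lt_or_gt with h | h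
  · exact key h
  · exact (key h).symm

lemma sum_mul_measureReal_le_integral {X ι : Type*} [MeasurableSpace X] {μ : Measure X}
    [IsFiniteMeasure μ] {f : X → ℝ} (hf : Integrable f μ) (hf0 : 0 ≤ f) {E : ι → Set X}
    (hE : ∀ i, MeasurableSet (E i)) (hdisj : Pairwise (Disjoint on E)) (s : Finset ι)
    {c : ι → ℝ} (hc : ∀ i ∈ s, ∀ x ∈ E i, c i ≤ f x) :
    ∑ i ∈ s, c i * μ.real (E i) ≤ ∫ x, f x ∂μ :=
  calc ∑ i ∈ s, c i * μ.real (E i) ≤ ∑ i ∈ s, ∫ x in E i, f x ∂μ :=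
        sum_le_sum fun i hi => setIntegral_ge_of_const_le_real (hE i) (measure_ne_top μ _)
          (hc i hi) hf.integrableOn
    _ = ∫ x in ⋃ i ∈ s, E i, f x ∂μ :=
        (integral_biUnion_finset s (fun i _ => hE i) (hdisj.set_pairwise _)
          fun _ _ => hf.integrableOn).symm
    _ ≤ ∫ x, f x ∂μ := setIntegral_le_integral hf (Eventually.of_forall hf0)

lemma IsHaar.div_eight_le_integral_sqrt_fejerSum {μ : Measure WG} (hμ : IsHaar μ) (A : ℕ) :
    ((A - 1 : ℕ) : ℝ) / 8 ≤ ∫ x, √|fejerSum (qq (A - 1)) (tau (2 * A) x)| ∂μ := by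
  have := hμ.isProbabilityMeasure
  set q := qq (A - 1)
  have hbound : ∀ x, ‖√|fejerSum q (tau (2 * A) x)|‖ ≤ √(q * (q + 1) / 2) := fun x => by
    rw [Real.norm_of_nonneg (Real.sqrt_nonneg _)]
    exact Real.sqrt_le_sqrt (abs_fejerSum_le q _)
  have hint : Integrable (fun x => √|fejerSum q (tau (2 * A) x)|) μ :=
    Integrable.of_bound (by fun_prop : Measurable _).aestronglyMeasurable _
      (Eventually.of_forall hbound)
  have hterm : ∀ m ∈ range (A - 1),
      (4 : ℝ) ^ m * μ.real (tau (2 * A) ⁻¹' cyl (2 * m + 3) (spikePair m)) = 1 / 8 := by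
    intro m hm
    rw [measureReal_def, hμ.measure_preimage_tau_cyl (by simp at hm; omega), ENNReal.toReal_pow,
      ENNReal.toReal_inv, ENNReal.toReal_ofNat, pow_add, ← mul_assoc, pow_mul,
      ← mul_pow]
    norm_num
  calc ((A - 1 : ℕ) : ℝ) / 8
      = ∑ m ∈ range (A - 1), 4 ^ m * μ.real (tau (2 * A) ⁻¹' cyl (2 * m + 3) (spikePair m)) := by
        rw [sum_congr rfl hterm, sum_const, card_range, nsmul_eq_mul]
        ring
    _ ≤ ∫ x, √|fejerSum q (tau (2 * A) x)| ∂μ :=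
        sum_mul_measureReal_le_integral hint (fun x => Real.sqrt_nonneg _)
          (fun m => measurable_tau _ (measurableSet_cyl _ _))
          (pairwise_disjoint_cyl_spikePair.mono fun _ _ h => h.preimage _) _
          fun m hm x hx => by
            rw [Real.le_sqrt (by positivity) (abs_nonneg _), ← pow_mul, pow_mul']
            norm_num
            exact le_abs_fejerSum_qq_of_mem_cyl_spikePair hx (by simp at hm; omega)

/-- For `A = 2^{i-1}`, `i ≥ 3`:
`∫_G |q_{A-1} K_{q_{A-1}}^w(τ_{2A}(x))|^{1/2} dμ(x) ≥ c·A`. -/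
theorem fejer_integral_lower_bound (μ : Measure WG) (hμ : IsHaar μ) :
    ∃ c : ℝ, 0 < c ∧ ∀ i : ℕ, 3 ≤ i →
      c * (2 ^ (i - 1) : ℕ) ≤
        ∫ x, Real.sqrt
          ((qq (2 ^ (i - 1) - 1) : ℝ) * |Kw (qq (2 ^ (i - 1) - 1)) (tau (2 * 2 ^ (i - 1)) x)|)
          ∂μ := by
  refine ⟨1 / 16, by norm_num, fun i hi => ?_⟩
  have hA : 2 ≤ 2 ^ (i - 1) := Nat.le_self_pow (by omega) 2
  have hK : ∀ (n : ℕ) y, (n : ℝ) * |Kw n y| = |fejerSum n y| := fun n y => by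
    rw [← natCast_mul_Kw, abs_mul, Nat.abs_cast]
  simp_rw [hK]
  refine le_trans ?_ (hμ.div_eight_le_integral_sqrt_fejerSum (2 ^ (i - 1)))
  rw [Nat.cast_sub (by omega)]
  have : (2 : ℝ) ≤ (2 ^ (i - 1) : ℕ) := by exact_mod_cast hA
  push_cast at this ⊢
  linarith

end
end
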